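/- In the pullback setup, let d be a vertex of R₂ and suppose u is an A-universal vertex of A₁ with A ∘ u = p₂ ∘ d (as morphisms Δ[0] ⟶ A₂) and such that the vertex ev ∘ D₁ ∘ u of B₁ is B-universal. Then there exists a vertex ℓ of R₁ with R ∘ ℓ = d and p₁ ∘ ℓ = u, and moreover ℓ is R-universal. -/

import Mathlib

/-!
STATEMENT 10: In the pullback setup, given a vertex `d` of `R₂` and an
`A`-universal vertex `u` of `A₁` with `A ∘ u = p₂ ∘ d` such that the vertex
`ev ∘ D₁ ∘ u` of `B₁` is `B`-universal, there exists a vertex `ℓ` of `R₁` with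
`R ∘ ℓ = d` and `p₁ ∘ ℓ = u`, and moreover `ℓ` is `R`-universal.
-/

open CategoryTheory Simplicial MonoidalCategory Opposite Limits

noncomputable instance : MonoidalClosed SSet.{0} :=
  inferInstanceAs (MonoidalClosed (SimplexCategoryᵒᵖ ⥤ Type 0))

/-- The `i`-th vertex of the standard `n`-simplex, as a morphism `Δ[0] ⟶ Δ[n]`. -/
def vertexMor (n : ℕ) (i : Fin (n + 1)) : (Δ[0] : SSet.{0}) ⟶ Δ[n] :=
  SSet.stdSimplex.map (SimplexCategory.const (SimplexCategory.mk 0) (SimplexCategory.mk n) i)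

/-- The `i`-th vertex of the boundary `∂Δ[n]` (for `0 < n`), as a morphism `Δ[0] ⟶ ∂Δ[n]`. -/
def bdryVertexMor (n : ℕ) (hn : 0 < n) (i : Fin (n + 1)) : (Δ[0] : SSet.{0}) ⟶ ∂Δ[n] where
  app k := TypeCat.ofHom fun x =>
    ⟨(vertexMor n i).app k x, by
      intro hsurj
      obtain ⟨j, hj⟩ : ∃ j : Fin (n + 1), j ≠ i := by
        by_cases h : i = 0
        · exact ⟨⟨1, by omega⟩, by subst h; intro hc; exact absurd (congrArg Fin.val hc) (by simp)⟩
        · exact ⟨0, fun h0 => h h0.symm⟩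
      obtain ⟨a, ha⟩ := hsurj j
      have hval : SSet.stdSimplex.asOrderHom ((vertexMor n i).app k x) a = i := rfl
      exact hj (ha.symm.trans hval)⟩
  naturality k k' g := by
    ext x
    apply Subtype.ext
    exact congrArg (fun f => f x) ((vertexMor n i).naturality g)

/-- A vertex `u : Δ[0] ⟶ E` is `p`-universal (for `p : E ⟶ X`) if every
boundary-filling problem (`n ≥ 1`) whose restriction to the terminal vertex
`⟨n⟩ : Δ[0] ⟶ ∂Δ[n]` is `u` has a solution. -/
def IsUniversalVertex {E X : SSet.{0}} (p : E ⟶ X) (u : (Δ[0] : SSet.{0}) ⟶ E) : Prop :=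
  ∀ (n : ℕ) (hn : 0 < n) (t : (∂Δ[n] : SSet.{0}) ⟶ E) (s : (Δ[n] : SSet.{0}) ⟶ X),
    t ≫ p = (∂Δ[n]).ι ≫ s →
    bdryVertexMor n hn (Fin.last n) ≫ t = u →
    ∃ ℓ : (Δ[n] : SSet.{0}) ⟶ E, (∂Δ[n]).ι ≫ ℓ = t ∧ ℓ ≫ p = s

/-- The restriction map `res : Z^{Δ[m]} ⟶ Z^{∂Δ[m]}` along the boundary inclusion,
where `Z^K := (ihom K).obj Z` is the internal hom of simplicial sets. -/
noncomputable def expRes (m : ℕ) (Z : SSet.{0}) :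
    (ihom ((Δ[m] : SSet.{0}))).obj Z ⟶ (ihom ((∂Δ[m] : SSet.{0}))).obj Z :=
  (MonoidalClosed.pre ((∂Δ[m]).ι)).app Z

/-- The evaluation map `ev : Z^{∂Δ[m]} ⟶ Z`, restriction along the terminal vertex
`⟨m⟩ : Δ[0] ⟶ ∂Δ[m]`. -/
noncomputable def evTerm (m : ℕ) (hm : 0 < m) (Z : SSet.{0}) :
    (ihom ((∂Δ[m] : SSet.{0}))).obj Z ⟶ Z :=
  (λ_ _).inv ≫
    (((SSet.unitHomEquiv (Δ[0] : SSet.{0})).symm (SSet.yonedaEquiv (𝟙 (Δ[0] : SSet.{0}))) ≫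
        bdryVertexMor m hm (Fin.last m)) ▷ _) ≫
      (ihom.ev ((∂Δ[m] : SSet.{0}))).app Z

section PullbackSetup

variable (m : ℕ) {A₁ A₂ B₁ B₂ : SSet.{0}} (A : A₁ ⟶ A₂) (B : B₁ ⟶ B₂)
  (D₁ : A₁ ⟶ (ihom ((∂Δ[m] : SSet.{0}))).obj B₁)
  (D₂ : A₂ ⟶ (ihom ((∂Δ[m] : SSet.{0}))).obj B₂)

/-- Given the commuting square `B^{∂Δ[m]} ∘ D₁ = D₂ ∘ A`, the induced morphism
`R : R₁ ⟶ R₂` between the pullbacks `Rᵢ` of `Dᵢ` and `res : Bᵢ^{Δ[m]} ⟶ Bᵢ^{∂Δ[m]}`,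
induced by `A` and `B^{Δ[m]}`. -/
noncomputable def inducedR (hD : D₁ ≫ (ihom ((∂Δ[m] : SSet.{0}))).map B = A ≫ D₂) :
    pullback D₁ (expRes m B₁) ⟶ pullback D₂ (expRes m B₂) :=
  pullback.map _ _ _ _ A ((ihom ((Δ[m] : SSet.{0}))).map B)
    ((ihom ((∂Δ[m] : SSet.{0}))).map B) hD
    ((MonoidalClosed.pre ((∂Δ[m]).ι)).naturality B).symm

end PullbackSetup


namespace Statement10
open SSet Finset
open SSet.stdSimplex (asOrderHom)

instance homToZeroSub (q : SimplexCategory) : Subsingleton (q ⟶ ⦋0⦌) := by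
  constructor; intro f g
  ext i : 3
  apply Subsingleton.elim (α := Fin 1)

instance delta0Sub (q : SimplexCategoryᵒᵖ) : Subsingleton ((Δ[0] : SSet.{0}).obj q) :=
  ⟨fun x y => congrArg ULift.up (Subsingleton.elim (α := (unop q ⟶ ⦋0⦌)) x.down y.down)⟩

variable {m n : ℕ}

lemma happ {X Y : SSet.{0}} {f g : X ⟶ Y} (h : f = g) (q : SimplexCategoryᵒᵖ) (x : X.obj q) :
    f.app q x = g.app q x := by rw [h]

/-- extensionality for simplices of the standard simplex -/
lemma stdext {k : ℕ} {q : SimplexCategoryᵒᵖ} {x y : (Δ[k] : SSet.{0}).obj q}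
    (h : ∀ i, asOrderHom x i = asOrderHom y i) : x = y := by
  apply ULift.down_injective
  apply SimplexCategory.Hom.ext
  apply OrderHom.ext
  funext i
  exact h i

noncomputable abbrev Pr (m n : ℕ) : SSet.{0} := (Δ[m] : SSet.{0}) ⊗ Δ[n]

abbrev LL (m n : ℕ) := Fin (m + 1) ×ₗ Fin (n + 1)


def pf {q : SimplexCategoryᵒᵖ} (σ : (Pr m n).obj q) : Fin (q.unop.len + 1) → LL m n :=
  fun i => toLex (asOrderHom σ.1 i, asOrderHom σ.2 i)

lemma pf_mono {q : SimplexCategoryᵒᵖ} (σ : (Pr m n).obj q) : Monotone (pf σ) :=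
  fun _ _ h => Prod.Lex.toLex_mono ⟨(asOrderHom σ.1).monotone h, (asOrderHom σ.2).monotone h⟩

lemma pf_map {q q' : SimplexCategoryᵒᵖ} (θ : q ⟶ q') (σ : (Pr m n).obj q) :
    pf ((Pr m n).map θ σ) = pf σ ∘ θ.unop.toOrderHom := rfl

def ch {q : SimplexCategoryᵒᵖ} (σ : (Pr m n).obj q) : Finset (LL m n) :=
  Finset.image (pf σ) Finset.univ

lemma mem_ch {q : SimplexCategoryᵒᵖ} {σ : (Pr m n).obj q} {x : LL m n} :
    x ∈ ch σ ↔ ∃ i, pf σ i = x := by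
  simp [ch]

lemma ch_nonempty {q : SimplexCategoryᵒᵖ} (σ : (Pr m n).obj q) : (ch σ).Nonempty :=
  ⟨pf σ 0, mem_ch.2 ⟨0, rfl⟩⟩

lemma ch_map_subset {q q' : SimplexCategoryᵒᵖ} (θ : q ⟶ q') (σ : (Pr m n).obj q) :
    ch ((Pr m n).map θ σ) ⊆ ch σ := by
  intro x hx
  obtain ⟨i, hi⟩ := mem_ch.1 hx
  exact mem_ch.2 ⟨θ.unop.toOrderHom i, hi⟩

lemma cmp_ch {q : SimplexCategoryᵒᵖ} (σ : (Pr m n).obj q) :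
    ∀ x ∈ ch σ, ∀ y ∈ ch σ, ofLex x ≤ ofLex y ∨ ofLex y ≤ ofLex x := by
  intro x hx y hy
  obtain ⟨i, hi⟩ := mem_ch.1 hx
  obtain ⟨j, hj⟩ := mem_ch.1 hy
  subst hi hj
  rcases le_total i j with h | h
  · exact Or.inl ⟨(asOrderHom σ.1).monotone h, (asOrderHom σ.2).monotone h⟩
  · exact Or.inr ⟨(asOrderHom σ.1).monotone h, (asOrderHom σ.2).monotone h⟩

/-- the "S" predicate : being in the union ∂Δ[m] ⊗ Δ[n] ∪ Δ[m] ⊗ ∂Δ[n] -/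
def Sp {q : SimplexCategoryᵒᵖ} (σ : (Pr m n).obj q) : Prop :=
  ¬ Function.Surjective ⇑(asOrderHom σ.1) ∨ ¬ Function.Surjective ⇑(asOrderHom σ.2)

lemma surj1_iff_ch {q : SimplexCategoryᵒᵖ} (σ : (Pr m n).obj q) :
    Function.Surjective ⇑(asOrderHom σ.1) ↔ ∀ v, ∃ x ∈ ch σ, (ofLex x).1 = v := by
  constructor
  · intro h v
    obtain ⟨i, hi⟩ := h v
    exact ⟨pf σ i, mem_ch.2 ⟨i, rfl⟩, hi⟩
  · intro h v
    obtain ⟨x, hx, hv⟩ := h v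
    obtain ⟨i, hi⟩ := mem_ch.1 hx
    exact ⟨i, by rw [← hv, ← hi]; rfl⟩

lemma surj2_iff_ch {q : SimplexCategoryᵒᵖ} (σ : (Pr m n).obj q) :
    Function.Surjective ⇑(asOrderHom σ.2) ↔ ∀ v, ∃ x ∈ ch σ, (ofLex x).2 = v := by
  constructor
  · intro h v
    obtain ⟨i, hi⟩ := h v
    exact ⟨pf σ i, mem_ch.2 ⟨i, rfl⟩, hi⟩
  · intro h v
    obtain ⟨x, hx, hv⟩ := h v
    obtain ⟨i, hi⟩ := mem_ch.1 hx
    exact ⟨i, by rw [← hv, ← hi]; rfl⟩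

lemma Sp_iff_of_ch_eq {q q' : SimplexCategoryᵒᵖ} {σ : (Pr m n).obj q} {σ' : (Pr m n).obj q'}
    (h : ch σ = ch σ') : Sp σ ↔ Sp σ' := by
  unfold Sp
  rw [surj1_iff_ch, surj2_iff_ch, surj1_iff_ch, surj2_iff_ch, h]

lemma Sp_map {q q' : SimplexCategoryᵒᵖ} (θ : q ⟶ q') {σ : (Pr m n).obj q} (h : Sp σ) :
    Sp ((Pr m n).map θ σ) := by
  rcases h with h | h
  · exact Or.inl (fun hs =>
      h ((show Function.Surjective (⇑(asOrderHom σ.1) ∘ ⇑(θ.unop.toOrderHom)) from hs).of_comp))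
  · exact Or.inr (fun hs =>
      h ((show Function.Surjective (⇑(asOrderHom σ.2) ∘ ⇑(θ.unop.toOrderHom)) from hs).of_comp))

lemma top_le (x : LL m n) : x ≤ toLex (Fin.last m, Fin.last n) := by
  rcases lt_trichotomy ((ofLex x).1) (Fin.last m) with h | h | h
  · exact Prod.Lex.left _ _ h
  · exact le_of_eq_of_le (by rw [← h]; rfl) (Prod.Lex.right _ (Fin.le_last _))
  · exact absurd (Fin.le_last _) (not_le.2 h)

lemma top_mem_ch {q : SimplexCategoryᵒᵖ} {σ : (Pr m n).obj q} (h : ¬ Sp σ) :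
    toLex (Fin.last m, Fin.last n) ∈ ch σ := by
  rw [Sp, not_or, not_not, not_not] at h
  obtain ⟨i, hi⟩ := h.1 (Fin.last m)
  obtain ⟨j, hj⟩ := h.2 (Fin.last n)
  refine mem_ch.2 ⟨max i j, ?_⟩
  have h1 : asOrderHom σ.1 (max i j) = Fin.last m :=
    le_antisymm (Fin.le_last _) (hi ▸ (asOrderHom σ.1).monotone (le_max_left i j))
  have h2 : asOrderHom σ.2 (max i j) = Fin.last n :=
    le_antisymm (Fin.le_last _) (hj ▸ (asOrderHom σ.2).monotone (le_max_right i j))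
  rw [pf, h1, h2]

lemma Sp_of_card_le_one (hm : 0 < m) {q : SimplexCategoryᵒᵖ} {σ : (Pr m n).obj q}
    (h : (ch σ).card ≤ 1) : Sp σ := by
  left
  intro hs
  obtain ⟨i, hi⟩ := hs 0
  obtain ⟨j, hj⟩ := hs (Fin.last m)
  have heq : pf σ i = pf σ j :=
    Finset.card_le_one.1 h _ (mem_ch.2 ⟨i, rfl⟩) _ (mem_ch.2 ⟨j, rfl⟩)
  have h1 : asOrderHom σ.1 i = asOrderHom σ.1 j := congrArg (fun x => (ofLex x).1) heq
  rw [hi, hj] at h1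
  have := congrArg Fin.val h1
  simp [Fin.last] at this
  omega

lemma ch_card_le {q : SimplexCategoryᵒᵖ} (σ : (Pr m n).obj q) :
    (ch σ).card ≤ m + n + 1 := by
  classical
  set wt : LL m n → ℕ := fun x => ((ofLex x).1 : ℕ) + ((ofLex x).2 : ℕ) with hwt
  have hinj : Set.InjOn wt (ch σ) := by
    intro x hx y hy hxy
    by_contra hne
    have hstrict : ∀ a b : LL m n, ofLex a ≤ ofLex b → a ≠ b → wt a < wt b := by
      intro a b hab hne'
      have h1 : (ofLex a).1 ≤ (ofLex b).1 := hab.1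
      have h2 : (ofLex a).2 ≤ (ofLex b).2 := hab.2
      have : (ofLex a).1 < (ofLex b).1 ∨ (ofLex a).2 < (ofLex b).2 := by
        by_contra hcon
        push_neg at hcon
        exact hne' (congrArg toLex (Prod.ext (le_antisymm h1 hcon.1) (le_antisymm h2 hcon.2)))
      rcases this with h | h
      · have := Fin.lt_iff_val_lt_val.1 h
        simp only [hwt]
        omega
      · have := Fin.lt_iff_val_lt_val.1 h
        simp only [hwt]
        omega
    rcases cmp_ch σ x hx y hy with h | h
    · exact absurd hxy (Nat.ne_of_lt (hstrict x y h hne))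
    · exact absurd hxy.symm (Nat.ne_of_lt (hstrict y x h (Ne.symm hne)))
  calc (ch σ).card = ((ch σ).image wt).card := (Finset.card_image_of_injOn hinj).symm
    _ ≤ (Finset.range (m + n + 1)).card := by
        apply Finset.card_le_card
        intro v hv
        obtain ⟨x, _, hx⟩ := Finset.mem_image.1 hv
        rw [Finset.mem_range, ← hx]
        have := (ofLex x).1.is_le
        have := (ofLex x).2.is_le
        simp only [hwt]
        omega
    _ = m + n + 1 := Finset.card_range _

section ChainObj

/-- comparability (in the product order) of a finset of `LL m n` -/
def Cmp (s : Finset (LL m n)) : Prop :=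
  ∀ x ∈ s, ∀ y ∈ s, ofLex x ≤ ofLex y ∨ ofLex y ≤ ofLex x

variable (s : Finset (LL m n)) {k : ℕ}

/-- enumeration of the chain -/
noncomputable def chEnum (hs : s.card = k + 1) : Fin (k + 1) ≃o s := s.orderIsoOfFin hs

lemma chEnum_mono_prod (hs : s.card = k + 1) (hcmp : Cmp s) : ∀ {j j' : Fin (k + 1)}, j ≤ j' →
    ofLex ((chEnum s hs j : LL m n)) ≤ ofLex ((chEnum s hs j' : LL m n)) := by
  intro j j' h
  have hlex : (chEnum s hs j : LL m n) ≤ chEnum s hs j' := (chEnum s hs).monotone h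
  rcases hcmp _ (chEnum s hs j).2 _ (chEnum s hs j').2 with h' | h'
  · exact h'
  · have : (chEnum s hs j' : LL m n) ≤ chEnum s hs j := Prod.Lex.toLex_mono h'
    have heq : (chEnum s hs j : LL m n) = chEnum s hs j' := le_antisymm hlex this
    rw [heq]

/-- the first component of the canonical representative -/
noncomputable def chA (hs : s.card = k + 1) (hcmp : Cmp s) : Fin (k + 1) →o Fin (m + 1) :=
  ⟨fun j => (ofLex (chEnum s hs j : LL m n)).1, fun _ _ h => (chEnum_mono_prod s hs hcmp h).1⟩

noncomputable def chB (hs : s.card = k + 1) (hcmp : Cmp s) : Fin (k + 1) →o Fin (n + 1) :=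
  ⟨fun j => (ofLex (chEnum s hs j : LL m n)).2, fun _ _ h => (chEnum_mono_prod s hs hcmp h).2⟩

/-- the canonical nondegenerate simplex of `Δ[m] ⊗ Δ[n]` with chain `s` -/
noncomputable def chObj (hs : s.card = k + 1) (hcmp : Cmp s) : (Pr m n).obj (op ⦋k⦌) :=
  (SSet.stdSimplex.objMk (chA s hs hcmp), SSet.stdSimplex.objMk (chB s hs hcmp))

lemma pf_chObj (hs : s.card = k + 1) (hcmp : Cmp s) (j : Fin (k + 1)) : pf (chObj s hs hcmp) j = (chEnum s hs j : LL m n) := rfl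

lemma ch_chObj (hs : s.card = k + 1) (hcmp : Cmp s) : ch (chObj s hs hcmp) = s := by
  ext x
  rw [mem_ch]
  constructor
  · rintro ⟨i, rfl⟩
    rw [pf_chObj]
    exact (chEnum s hs i).2
  · intro hx
    exact ⟨(chEnum s hs).symm ⟨x, hx⟩, by rw [pf_chObj, OrderIso.apply_symm_apply]⟩

lemma pf_chObj_injective (hs : s.card = k + 1) (hcmp : Cmp s) : Function.Injective (pf (chObj s hs hcmp)) := by
  intro i j hij
  rw [pf_chObj, pf_chObj] at hij
  exact (chEnum s hs).injective (Subtype.ext hij)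

lemma chEnum_last (hs : s.card = k + 1) (htop : toLex (Fin.last m, Fin.last n) ∈ s) :
    (chEnum s hs (Fin.last k) : LL m n) = toLex (Fin.last m, Fin.last n) := by
  apply le_antisymm (top_le _)
  have := (chEnum s hs).monotone (Fin.le_last ((chEnum s hs).symm ⟨_, htop⟩))
  rw [OrderIso.apply_symm_apply] at this
  exact this

/-- the structural surjection onto the canonical representative -/
noncomputable def chProj (hs : s.card = k + 1) {q : SimplexCategoryᵒᵖ} (σ : (Pr m n).obj q) (hch : ch σ = s) :
    (unop q) ⟶ ⦋k⦌ :=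
  SimplexCategory.Hom.mk
    ⟨fun i => (chEnum s hs).symm ⟨pf σ i, by rw [← hch]; exact mem_ch.2 ⟨i, rfl⟩⟩,
     fun i j h => (chEnum s hs).symm.monotone (Subtype.mk_le_mk.2 (pf_mono σ h))⟩

lemma chEnum_chProj (hs : s.card = k + 1) {q : SimplexCategoryᵒᵖ} (σ : (Pr m n).obj q) (hch : ch σ = s)
    (i : Fin ((unop q).len + 1)) :
    (chEnum s hs ((chProj s hs σ hch).toOrderHom i) : LL m n) = pf σ i := by
  show ((chEnum s hs) ((chEnum s hs).symm _) : LL m n) = _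
  rw [OrderIso.apply_symm_apply]

lemma chObj_decomp (hs : s.card = k + 1) (hcmp : Cmp s) {q : SimplexCategoryᵒᵖ} (σ : (Pr m n).obj q) (hch : ch σ = s) :
    (Pr m n).map (chProj s hs σ hch).op (chObj s hs hcmp) = σ := by
  have h1 : ∀ i, asOrderHom ((Pr m n).map (chProj s hs σ hch).op (chObj s hs hcmp)).1 i
      = asOrderHom σ.1 i := by
    intro i
    show (ofLex (chEnum s hs ((chProj s hs σ hch).toOrderHom i) : LL m n)).1 = _
    rw [chEnum_chProj]
    rfl
  have h2 : ∀ i, asOrderHom ((Pr m n).map (chProj s hs σ hch).op (chObj s hs hcmp)).2 i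
      = asOrderHom σ.2 i := by
    intro i
    show (ofLex (chEnum s hs ((chProj s hs σ hch).toOrderHom i) : LL m n)).2 = _
    rw [chEnum_chProj]
    rfl
  exact Prod.ext (stdext h1) (stdext h2)

lemma chProj_natural (hs : s.card = k + 1) {q q' : SimplexCategoryᵒᵖ} (θ : q ⟶ q') (σ : (Pr m n).obj q)
    (hch : ch σ = s) (hch' : ch ((Pr m n).map θ σ) = s) :
    chProj s hs ((Pr m n).map θ σ) hch' = θ.unop ≫ chProj s hs σ hch := by
  apply SimplexCategory.Hom.ext
  apply OrderHom.ext
  funext i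
  apply (chEnum s hs).injective
  apply Subtype.ext
  show (chEnum s hs ((chProj s hs _ hch').toOrderHom i) : LL m n) = _
  rw [chEnum_chProj]
  exact (chEnum_chProj s hs σ hch (θ.unop.toOrderHom i)).symm

end ChainObj

section Fill

variable {E X : SSet.{0}} (p : E ⟶ X) (u' : (Δ[0] : SSet.{0}) ⟶ E)
variable (tT : (Δ[m] : SSet.{0}) ⊗ ∂Δ[n] ⟶ E) (dD : (∂Δ[m] : SSet.{0}) ⊗ Δ[n] ⟶ E)
variable (sG : Pr m n ⟶ X)

/-- the filtration predicate: in the union subcomplex, or of rank `≤ k` -/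
def Yk (k : ℕ) {q : SimplexCategoryᵒᵖ} (σ : (Pr m n).obj q) : Prop :=
  Sp σ ∨ (ch σ).card ≤ k + 1

lemma Yk_map {k : ℕ} {q q' : SimplexCategoryᵒᵖ} (θ : q ⟶ q') {σ : (Pr m n).obj q}
    (h : Yk k σ) : Yk k ((Pr m n).map θ σ) := by
  rcases h with h | h
  · exact Or.inl (Sp_map θ h)
  · exact Or.inr (le_trans (Finset.card_le_card (ch_map_subset θ σ)) h)

lemma Yk_top {q : SimplexCategoryᵒᵖ} (σ : (Pr m n).obj q) : Yk (m + n) σ :=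
  Or.inr (ch_card_le σ)

structure PartialLift (k : ℕ) : Type where
  g : ∀ ⦃q : SimplexCategoryᵒᵖ⦄ (σ : (Pr m n).obj q), Yk k σ → E.obj q
  hS₁ : ∀ (q : SimplexCategoryᵒᵖ) (σ : (Pr m n).obj q)
      (h1 : ¬ Function.Surjective ⇑(asOrderHom σ.1)) (hy : Yk k σ),
      g σ hy = dD.app q (⟨σ.1, h1⟩, σ.2)
  hS₂ : ∀ (q : SimplexCategoryᵒᵖ) (σ : (Pr m n).obj q)
      (h2 : ¬ Function.Surjective ⇑(asOrderHom σ.2)) (hy : Yk k σ),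
      g σ hy = tT.app q (σ.1, ⟨σ.2, h2⟩)
  nat : ∀ {q q' : SimplexCategoryᵒᵖ} (θ : q ⟶ q') (σ : (Pr m n).obj q)
      (hy : Yk k σ) (hy' : Yk k ((Pr m n).map θ σ)),
      g ((Pr m n).map θ σ) hy' = E.map θ (g σ hy)
  hover : ∀ (q : SimplexCategoryᵒᵖ) (σ : (Pr m n).obj q) (hy : Yk k σ),
      p.app q (g σ hy) = sG.app q σ


lemma not_surj_const {r : ℕ} (hm : 0 < m) (c : Fin (m + 1)) {f : Fin (r + 1) → Fin (m + 1)}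
    (hf : ∀ i, f i = c) : ¬ Function.Surjective f := by
  intro hs
  obtain ⟨i, hi⟩ := hs 0
  obtain ⟨j, hj⟩ := hs (Fin.last m)
  rw [hf i] at hi
  rw [hf j] at hj
  rw [hi] at hj
  have := congrArg Fin.val hj
  simp [Fin.last] at this
  omega

lemma Yk_zero_sp (hm : 0 < m) {q : SimplexCategoryᵒᵖ} {σ : (Pr m n).obj q} (hy : Yk 0 σ) :
    Sp σ := hy.elim id (Sp_of_card_le_one hm)

variable {p u' tT dD sG}

lemma PartialLift.gcongr {k : ℕ} (L : PartialLift p tT dD sG k) {q : SimplexCategoryᵒᵖ}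
    {σ σ' : (Pr m n).obj q} (h : σ = σ') (hy : Yk k σ) (hy' : Yk k σ') :
    L.g σ hy = L.g σ' hy' := by subst h; rfl


/-- agreement of the two boundary pieces -/
def HTD : Prop := ∀ (q : SimplexCategoryᵒᵖ) (x : (Δ[m] : SSet.{0}).obj q)
    (y : (Δ[n] : SSet.{0}).obj q) (h1 : ¬ Function.Surjective ⇑(asOrderHom x))
    (h2 : ¬ Function.Surjective ⇑(asOrderHom y)),
    dD.app q (⟨x, h1⟩, y) = tT.app q (x, ⟨y, h2⟩)

/-- the vertex condition -/
def HVert : Prop := ∀ (q : SimplexCategoryᵒᵖ) (x₀ : (Δ[0] : SSet.{0}).obj q)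
    (h1 : ¬ Function.Surjective ⇑(asOrderHom (SSet.stdSimplex.const m (Fin.last m) q))),
    dD.app q (⟨SSet.stdSimplex.const m (Fin.last m) q, h1⟩,
      SSet.stdSimplex.const n (Fin.last n) q) = u'.app q x₀

noncomputable def baseG (hm : 0 < m) (tT : (Δ[m] : SSet.{0}) ⊗ ∂Δ[n] ⟶ E)
    (dD : (∂Δ[m] : SSet.{0}) ⊗ Δ[n] ⟶ E) :
    ∀ ⦃q : SimplexCategoryᵒᵖ⦄ (σ : (Pr m n).obj q), Yk 0 σ → E.obj q := fun q σ hy =>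
  @dite _ (¬ Function.Surjective ⇑(asOrderHom σ.1)) (Classical.dec _)
    (fun h1 => dD.app q (⟨σ.1, h1⟩, σ.2))
    (fun h1 => tT.app q (σ.1, ⟨σ.2, ((Yk_zero_sp hm hy).resolve_left h1)⟩))

noncomputable def baseLift (hm : 0 < m) (hTD : HTD (tT := tT) (dD := dD))
    (hTp : tT ≫ p = ((Δ[m] : SSet.{0}) ◁ (∂Δ[n]).ι) ≫ sG)
    (hDp : dD ≫ p = ((∂Δ[m]).ι ▷ (Δ[n] : SSet.{0})) ≫ sG) :
    PartialLift p tT dD sG 0 where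
  g := baseG hm tT dD
  hS₁ q σ h1 hy := by unfold baseG; rw [dif_pos h1]
  hS₂ q σ h2 hy := by
    unfold baseG
    by_cases h1 : ¬ Function.Surjective ⇑(asOrderHom σ.1)
    · rw [dif_pos h1]
      exact hTD q σ.1 σ.2 h1 h2
    · rw [dif_neg h1]
  nat {q q'} θ σ hy hy' := by
    unfold baseG
    by_cases h1 : ¬ Function.Surjective ⇑(asOrderHom σ.1)
    · have h1' : ¬ Function.Surjective ⇑(asOrderHom ((Pr m n).map θ σ).1) := fun hs =>
        h1 ((show Function.Surjective (⇑(asOrderHom σ.1) ∘ ⇑(θ.unop.toOrderHom)) from hs).of_comp)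
      rw [dif_pos h1', dif_pos h1]
      exact FunctorToTypes.naturality dD θ ((⟨σ.1, h1⟩, σ.2) : ((∂Δ[m] : SSet.{0}) ⊗ (Δ[n] : SSet.{0})).obj q)
    · have h2 : ¬ Function.Surjective ⇑(asOrderHom σ.2) := (Yk_zero_sp hm hy).resolve_left h1
      have h2' : ¬ Function.Surjective ⇑(asOrderHom ((Pr m n).map θ σ).2) := fun hs =>
        h2 ((show Function.Surjective (⇑(asOrderHom σ.2) ∘ ⇑(θ.unop.toOrderHom)) from hs).of_comp)
      rw [dif_neg h1]
      by_cases h1' : ¬ Function.Surjective ⇑(asOrderHom ((Pr m n).map θ σ).1)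
      · rw [dif_pos h1']
        rw [hTD q' _ _ h1' h2']
        exact FunctorToTypes.naturality tT θ ((σ.1, ⟨σ.2, h2⟩) : ((Δ[m] : SSet.{0}) ⊗ (∂Δ[n] : SSet.{0})).obj q)
      · rw [dif_neg h1']
        exact FunctorToTypes.naturality tT θ ((σ.1, ⟨σ.2, h2⟩) : ((Δ[m] : SSet.{0}) ⊗ (∂Δ[n] : SSet.{0})).obj q)
  hover q σ hy := by
    unfold baseG
    by_cases h1 : ¬ Function.Surjective ⇑(asOrderHom σ.1)
    · rw [dif_pos h1]
      exact happ hDp q (⟨σ.1, h1⟩, σ.2)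
    · rw [dif_neg h1]
      exact happ hTp q
        (σ.1, ⟨σ.2, (Yk_zero_sp hm hy).resolve_left h1⟩)

lemma objEquiv_map {k : ℕ} {q q' : SimplexCategoryᵒᵖ} (θ : q ⟶ q') (x : (Δ[k] : SSet.{0}).obj q) :
    (SSet.stdSimplex.objEquiv ((Δ[k] : SSet.{0}).map θ x))
      = θ.unop ≫ (SSet.stdSimplex.objEquiv x) := rfl

lemma asOrderHom_objEquiv_symm {k : ℕ} {q : SimplexCategoryᵒᵖ} (f : unop q ⟶ ⦋k⦌) :
    asOrderHom (SSet.stdSimplex.objEquiv.symm f : (Δ[k] : SSet.{0}).obj q)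
      = f.toOrderHom := rfl

lemma Pmap_comp_op {k : ℕ} {q q' : SimplexCategoryᵒᵖ} (θ : q ⟶ q') (f : unop q ⟶ ⦋k⦌)
    (ρ : (Pr m n).obj (op ⦋k⦌)) :
    (Pr m n).map (θ.unop ≫ f).op ρ = (Pr m n).map θ ((Pr m n).map f.op ρ) := by
  rw [op_comp, Quiver.Hom.op_unop, FunctorToTypes.map_comp_apply]

lemma ch_map_card_le {k : ℕ} {q : SimplexCategoryᵒᵖ} (f : unop q ⟶ ⦋k + 1⦌)
    (hf : ¬ Function.Surjective ⇑f.toOrderHom) (ρ : (Pr m n).obj (op ⦋k + 1⦌)) :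
    (ch ((Pr m n).map f.op ρ)).card ≤ k + 1 := by
  have h1 : ch ((Pr m n).map f.op ρ)
      = (Finset.univ.image ⇑f.toOrderHom).image (pf ρ) := by
    rw [ch, pf_map, Finset.image_image]
    rfl
  rw [h1]
  refine le_trans Finset.card_image_le ?_
  obtain ⟨v, hv⟩ := not_forall.1 hf
  rw [not_exists] at hv
  have hsub : Finset.univ.image ⇑f.toOrderHom ⊆ Finset.univ.erase v := by
    intro x hx
    obtain ⟨i, _, rfl⟩ := Finset.mem_image.1 hx
    exact Finset.mem_erase.2 ⟨fun h => hv i h, Finset.mem_univ _⟩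
  refine le_trans (Finset.card_le_card hsub) ?_
  rw [Finset.card_erase_of_mem (Finset.mem_univ _), Finset.card_univ]
  simp

lemma ch_map_eq_of_surj {k : ℕ} {q : SimplexCategoryᵒᵖ} (f : unop q ⟶ ⦋k⦌)
    (hf : Function.Surjective ⇑f.toOrderHom) (ρ : (Pr m n).obj (op ⦋k⦌)) :
    ch ((Pr m n).map f.op ρ) = ch ρ := by
  ext x
  rw [mem_ch, mem_ch]
  constructor
  · rintro ⟨i, rfl⟩
    exact ⟨f.toOrderHom i, rfl⟩
  · rintro ⟨i, rfl⟩
    obtain ⟨j, hj⟩ := hf i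
    exact ⟨j, by rw [pf_map]; exact congrArg (pf ρ) hj⟩

lemma stepLift (hm : 0 < m) (hu' : IsUniversalVertex p u')
    (hTD : HTD (tT := tT) (dD := dD)) (hV : HVert (u' := u') (dD := dD))
    (hTp : tT ≫ p = ((Δ[m] : SSet.{0}) ◁ (∂Δ[n]).ι) ≫ sG)
    (hDp : dD ≫ p = ((∂Δ[m]).ι ▷ (Δ[n] : SSet.{0})) ≫ sG)
    (k : ℕ) (L : PartialLift p tT dD sG k) :
    Nonempty (PartialLift p tT dD sG (k + 1)) := by
  classical
  -- the filler for each chain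
  have Fill : ∀ (s : Finset (LL m n)) (hs : s.card = (k + 1) + 1) (hcmp : Cmp s)
      (hns : ¬ Sp (chObj s hs hcmp)),
      ∃ Lf : (Δ[k + 1] : SSet.{0}) ⟶ E,
        (∀ (q : SimplexCategoryᵒᵖ) (f : unop q ⟶ ⦋k + 1⦌)
            (hf : ¬ Function.Surjective ⇑f.toOrderHom)
            (hy : Yk k ((Pr m n).map f.op (chObj s hs hcmp))),
          Lf.app q (SSet.stdSimplex.objEquiv.symm f)
            = L.g ((Pr m n).map f.op (chObj s hs hcmp)) hy) ∧
        (∀ (q : SimplexCategoryᵒᵖ) (w : (Δ[k + 1] : SSet.{0}).obj q),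
          p.app q (Lf.app q w) = sG.app q
            ((Pr m n).map (SSet.stdSimplex.objEquiv w).op (chObj s hs hcmp))) := by
    intro s hs hcmp hns
    set ρ := chObj s hs hcmp with hρ
    have hYτ : ∀ (q : SimplexCategoryᵒᵖ) (w : (∂Δ[k + 1] : SSet.{0}).obj q),
        Yk k ((Pr m n).map (SSet.stdSimplex.objEquiv w.1).op ρ) := by
      intro q w
      exact Or.inr (ch_map_card_le _ w.2 ρ)
    -- the boundary datum
    set tρ : (∂Δ[k + 1] : SSet.{0}) ⟶ E :=
      { app := fun q => TypeCat.ofHom fun w => L.g ((Pr m n).map (SSet.stdSimplex.objEquiv w.1).op ρ)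
          (hYτ q w)
        naturality := by
          intro q q' θ
          ext w
          show L.g _ _ = E.map θ (L.g _ _)
          have harg : (Pr m n).map
              (SSet.stdSimplex.objEquiv ((∂Δ[k+1] : SSet.{0}).map θ w).1).op ρ
                = (Pr m n).map θ ((Pr m n).map (SSet.stdSimplex.objEquiv w.1).op ρ) := by
            rw [show SSet.stdSimplex.objEquiv ((∂Δ[k+1] : SSet.{0}).map θ w).1
                  = θ.unop ≫ SSet.stdSimplex.objEquiv w.1 from rfl, Pmap_comp_op]
          exact (L.gcongr harg _ (Yk_map θ (hYτ q w))).trans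
            (L.nat θ _ (hYτ q w) _) } with htρ
    set sρ : (Δ[k + 1] : SSet.{0}) ⟶ X :=
      { app := fun q => TypeCat.ofHom fun w => sG.app q ((Pr m n).map (SSet.stdSimplex.objEquiv w).op ρ)
        naturality := by
          intro q q' θ
          ext w
          show sG.app q' _ = X.map θ (sG.app q _)
          refine (congrArg (sG.app q') (show (Pr m n).map (SSet.stdSimplex.objEquiv
              ((Δ[k+1] : SSet.{0}).map θ w)).op ρ
              = (Pr m n).map θ ((Pr m n).map (SSet.stdSimplex.objEquiv w).op ρ)
            from by rw [objEquiv_map, Pmap_comp_op])).trans ?_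
          exact FunctorToTypes.naturality sG θ _ } with hsρ
    have hsq : tρ ≫ p = (∂Δ[(k + 1)]).ι ≫ sρ := by
      ext q w
      exact L.hover q _ (hYτ q w)
    have htop : toLex (Fin.last m, Fin.last n) ∈ s := by
      have := top_mem_ch hns
      rwa [ch_chObj] at this
    have hvx : bdryVertexMor (k + 1) (Nat.succ_pos k) (Fin.last (k + 1)) ≫ tρ = u' := by
      ext q x₀
      show L.g _ _ = u'.app q x₀
      have hconst : (Pr m n).map (SSet.stdSimplex.objEquiv
            ((vertexMor (k + 1) (Fin.last (k + 1))).app q x₀)).op ρ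
          = (SSet.stdSimplex.const m (Fin.last m) q,
             SSet.stdSimplex.const n (Fin.last n) q) := by
        have hA : ∀ i, asOrderHom ((Pr m n).map (SSet.stdSimplex.objEquiv
            ((vertexMor (k + 1) (Fin.last (k + 1))).app q x₀)).op ρ).1 i = Fin.last m := by
          intro i
          show (ofLex ((chEnum s hs (Fin.last (k + 1)) : s) : LL m n)).1 = _
          rw [chEnum_last s hs htop]
          rfl
        have hB : ∀ i, asOrderHom ((Pr m n).map (SSet.stdSimplex.objEquiv
            ((vertexMor (k + 1) (Fin.last (k + 1))).app q x₀)).op ρ).2 i = Fin.last n := by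
          intro i
          show (ofLex ((chEnum s hs (Fin.last (k + 1)) : s) : LL m n)).2 = _
          rw [chEnum_last s hs htop]
          rfl
        exact Prod.ext (stdext (fun i => hA i)) (stdext (fun i => hB i))
      have h1c : ¬ Function.Surjective ⇑(asOrderHom
          (((SSet.stdSimplex.const m (Fin.last m) q,
            SSet.stdSimplex.const n (Fin.last n) q) : (Pr m n).obj q)).1) :=
        not_surj_const hm (Fin.last m) (fun _ => rfl)
      have hyc : Yk k (((SSet.stdSimplex.const m (Fin.last m) q,
          SSet.stdSimplex.const n (Fin.last n) q) : (Pr m n).obj q)) :=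
        Or.inl (Or.inl h1c)
      refine (L.gcongr hconst _ hyc).trans ?_
      exact (L.hS₁ q _ h1c hyc).trans (hV q x₀ _)
    obtain ⟨Lf, hLf1, hLf2⟩ := hu' (k + 1) (Nat.succ_pos k) tρ sρ hsq hvx
    refine ⟨Lf, ?_, ?_⟩
    · intro q f hf hy
      have : Lf.app q (SSet.stdSimplex.objEquiv.symm f)
          = ((∂Δ[(k+1)]).ι ≫ Lf).app q
              ⟨SSet.stdSimplex.objEquiv.symm f, hf⟩ := rfl
      rw [this, hLf1]
      exact L.gcongr rfl _ _
    · intro q w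
      have := happ hLf2 q w
      exact this
  choose FillF hFill1 hFill2 using Fill
  have hcard : ∀ {q : SimplexCategoryᵒᵖ} {σ : (Pr m n).obj q}, Yk (k + 1) σ → ¬ Yk k σ →
      (ch σ).card = (k + 1) + 1 := by
    intro q σ hy hk
    have hns : ¬ Sp σ := fun h => hk (Or.inl h)
    have h1 : (ch σ).card ≤ k + 2 := hy.resolve_left hns
    have h2 : ¬ (ch σ).card ≤ k + 1 := fun h => hk (Or.inr h)
    omega
  have hns' : ∀ {q : SimplexCategoryᵒᵖ} {σ : (Pr m n).obj q} (hy : Yk (k + 1) σ)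
      (hk : ¬ Yk k σ), ¬ Sp (chObj (ch σ) (hcard hy hk) (cmp_ch σ)) := by
    intro q σ hy hk
    have hns : ¬ Sp σ := fun h => hk (Or.inl h)
    exact fun h => hns ((Sp_iff_of_ch_eq (ch_chObj (ch σ) (hcard hy hk) (cmp_ch σ))).1 h)
  have key : ∀ (s₁ s₂ : Finset (LL m n)) (hq : s₁ = s₂) (h1 : s₁.card = (k+1)+1)
      (h1' : s₂.card = (k+1)+1) (h2 : Cmp s₁) (h2' : Cmp s₂)
      (h3 : ¬ Sp (chObj s₁ h1 h2)) (h3' : ¬ Sp (chObj s₂ h1' h2'))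
      {q0 : SimplexCategoryᵒᵖ} (σ0 : (Pr m n).obj q0) (hch1 : ch σ0 = s₁) (hch2 : ch σ0 = s₂),
      (FillF s₁ h1 h2 h3).app q0
          (SSet.stdSimplex.objEquiv.symm (chProj s₁ h1 σ0 hch1))
        = (FillF s₂ h1' h2' h3').app q0
          (SSet.stdSimplex.objEquiv.symm (chProj s₂ h1' σ0 hch2)) := by
    intro s₁ s₂ hq
    subst hq
    intros
    rfl
  refine ⟨{
    g := fun q σ hy =>
      if hk : Yk k σ then L.g σ hk
      else (FillF (ch σ) (hcard hy hk) (cmp_ch σ) (hns' hy hk)).app q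
        (SSet.stdSimplex.objEquiv.symm (chProj (ch σ) (hcard hy hk) σ rfl)),
    hS₁ := ?_, hS₂ := ?_, nat := ?_, hover := ?_ }⟩
  · intro q σ h1 hy
    dsimp only
    have hk : Yk k σ := Or.inl (Or.inl h1)
    rw [dif_pos hk]
    exact L.hS₁ q σ h1 hk
  · intro q σ h2 hy
    dsimp only
    have hk : Yk k σ := Or.inl (Or.inr h2)
    rw [dif_pos hk]
    exact L.hS₂ q σ h2 hk
  · intro q q' θ σ hy hy'
    dsimp only
    by_cases hk : Yk k σ
    · rw [dif_pos hk, dif_pos (Yk_map θ hk)]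
      exact L.nat θ σ hk _
    · rw [dif_neg hk]
      have hns : ¬ Sp σ := fun h => hk (Or.inl h)
      set hc := hcard hy hk with hhc
      set f := chProj (ch σ) hc σ rfl with hf
      have hσθ : (Pr m n).map θ σ
          = (Pr m n).map (θ.unop ≫ f).op (chObj (ch σ) hc (cmp_ch σ)) := by
        conv_lhs => rw [← chObj_decomp (ch σ) hc (cmp_ch σ) σ rfl]
        rw [Pmap_comp_op]
      by_cases hk' : Yk k ((Pr m n).map θ σ)
      · rw [dif_pos hk']
        have hτ : ¬ Function.Surjective ⇑(θ.unop ≫ f).toOrderHom := by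
          intro hsurj
          have hcheq : ch ((Pr m n).map θ σ) = ch σ := by
            rw [hσθ, ch_map_eq_of_surj _ hsurj]; exact ch_chObj _ _ _
          rcases hk' with h | h
          · exact hns ((Sp_iff_of_ch_eq hcheq).1 h)
          · rw [hcheq, hc] at h
            omega
        refine (L.gcongr hσθ hk' (hσθ ▸ hk')).trans ?_
        refine ((hFill1 (ch σ) hc (cmp_ch σ) (hns' hy hk) q' (θ.unop ≫ f) hτ _).symm).trans ?_
        have hw : (SSet.stdSimplex.objEquiv.symm (θ.unop ≫ f)
              : (Δ[k+1] : SSet.{0}).obj q')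
            = (Δ[k+1] : SSet.{0}).map θ (SSet.stdSimplex.objEquiv.symm f) := rfl
        rw [hw]
        exact FunctorToTypes.naturality (FillF (ch σ) hc (cmp_ch σ) (hns' hy hk)) θ _
      · rw [dif_neg hk']
        have hcheq : ch ((Pr m n).map θ σ) = ch σ := by
          apply Finset.eq_of_subset_of_card_le (ch_map_subset θ σ)
          rw [hcard hy' hk']
          omega
        refine (key (ch ((Pr m n).map θ σ)) (ch σ) hcheq _ hc _ (cmp_ch σ) _ (hns' hy hk)
          ((Pr m n).map θ σ) rfl hcheq).trans ?_
        have hproj : chProj (ch σ) hc ((Pr m n).map θ σ) hcheq = θ.unop ≫ f :=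
          chProj_natural (ch σ) hc θ σ rfl hcheq
        rw [hproj]
        have hw : (SSet.stdSimplex.objEquiv.symm (θ.unop ≫ f)
              : (Δ[k+1] : SSet.{0}).obj q')
            = (Δ[k+1] : SSet.{0}).map θ (SSet.stdSimplex.objEquiv.symm f) := rfl
        rw [hw]
        exact FunctorToTypes.naturality (FillF (ch σ) hc (cmp_ch σ) (hns' hy hk)) θ _
  · intro q σ hy
    dsimp only
    by_cases hk : Yk k σ
    · rw [dif_pos hk]
      exact L.hover q σ hk
    · rw [dif_neg hk]
      refine (hFill2 (ch σ) (hcard hy hk) (cmp_ch σ) (hns' hy hk) q _).trans ?_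
      apply congrArg (sG.app q)
      rw [Equiv.apply_symm_apply]
      exact chObj_decomp (ch σ) (hcard hy hk) (cmp_ch σ) σ rfl

/-- The filling lemma: universal-vertex filling against the inclusion of
`∂Δ[m] ⊗ Δ[n] ∪ Δ[m] ⊗ ∂Δ[n]` into `Δ[m] ⊗ Δ[n]`. -/
lemma fillLemma (hm : 0 < m) (hu' : IsUniversalVertex p u')
    (hTD : HTD (tT := tT) (dD := dD)) (hV : HVert (u' := u') (dD := dD))
    (hTp : tT ≫ p = ((Δ[m] : SSet.{0}) ◁ (∂Δ[n]).ι) ≫ sG)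
    (hDp : dD ≫ p = ((∂Δ[m]).ι ▷ (Δ[n] : SSet.{0})) ≫ sG) :
    ∃ H : Pr m n ⟶ E,
      ((Δ[m] : SSet.{0}) ◁ (∂Δ[n]).ι) ≫ H = tT ∧
      ((∂Δ[m]).ι ▷ (Δ[n] : SSet.{0})) ≫ H = dD ∧
      H ≫ p = sG := by
  have : ∀ k : ℕ, Nonempty (PartialLift p tT dD sG k) := by
    intro k
    induction k with
    | zero => exact ⟨baseLift hm hTD hTp hDp⟩
    | succ k ih =>
      obtain ⟨L⟩ := ih
      exact stepLift hm hu' hTD hV hTp hDp k L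
  obtain ⟨L⟩ := this (m + n)
  refine ⟨{ app := fun q => TypeCat.ofHom fun σ => L.g σ (Yk_top σ),
            naturality := fun q q' θ => by ext σ; exact L.nat θ σ (Yk_top σ) (Yk_top _) }, ?_, ?_, ?_⟩
  · ext q w
    exact L.hS₂ q (w.1, w.2.1) w.2.2 _
  · ext q w
    exact L.hS₁ q (w.1.1, w.2) w.1.2 _
  · ext q σ
    exact L.hover q σ _

section Glue

open MonoidalClosed

lemma uncurry_comp_pre {Y Z K K' : SSet.{0}} (j : K' ⟶ K) (Φ : Y ⟶ (ihom K).obj Z) :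
    uncurry (Φ ≫ (MonoidalClosed.pre j).app Z) = (j ▷ Y) ≫ uncurry Φ := by
  rw [uncurry_natural_left, MonoidalClosed.uncurry_pre, ← Category.assoc, whisker_exchange,
    Category.assoc, ← uncurry_eq]

/-- the canonical morphism `𝟙_ SSet ⟶ Δ[0]` -/
noncomputable def wU : (𝟙_ SSet.{0}) ⟶ Δ[0] :=
  (SSet.unitHomEquiv (Δ[0] : SSet.{0})).symm (SSet.yonedaEquiv (𝟙 (Δ[0] : SSet.{0})))

lemma comp_evTerm {Z : SSet.{0}} (hm : 0 < m) (v : (Δ[0] : SSet.{0}) ⟶ (ihom (∂Δ[m] : SSet.{0})).obj Z) :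
    v ≫ evTerm m hm Z = (λ_ (Δ[0] : SSet.{0})).inv ≫
      ((wU ≫ bdryVertexMor m hm (Fin.last m)) ▷ (Δ[0] : SSet.{0})) ≫ uncurry v := by
  show v ≫ (λ_ _).inv ≫
      ((wU ≫ bdryVertexMor m hm (Fin.last m)) ▷ _) ≫ (ihom.ev ((∂Δ[m] : SSet.{0}))).app Z = _
  rw [uncurry_eq, ← Category.assoc v, MonoidalCategory.leftUnitor_inv_naturality,
    Category.assoc, ← Category.assoc (𝟙_ SSet.{0} ◁ v), whisker_exchange]
  simp only [Category.assoc]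

lemma vertexMor_app_const {k : ℕ} {q : SimplexCategoryᵒᵖ} (i : Fin (k + 1))
    (x : (Δ[0] : SSet.{0}).obj q) :
    (vertexMor k i).app q x = SSet.stdSimplex.const k i q :=
  stdext (fun _ => rfl)

set_option maxRecDepth 10000 in
lemma HVert_of {E : SSet.{0}} (hm : 0 < m) (hn : 0 < n) (u' : (Δ[0] : SSet.{0}) ⟶ E)
    (D : (Δ[n] : SSet.{0}) ⟶ (ihom (∂Δ[m] : SSet.{0})).obj E)
    (hv : vertexMor n (Fin.last n) ≫ D ≫ evTerm m hm E = u') :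
    HVert (u' := u') (dD := uncurry D) := by
  intro q x₀ h1
  have h2 : (vertexMor n (Fin.last n) ≫ D) ≫ evTerm m hm E = (λ_ (Δ[0] : SSet.{0})).inv ≫
      ((wU ≫ bdryVertexMor m hm (Fin.last m)) ▷ (Δ[0] : SSet.{0})) ≫
        (((∂Δ[m] : SSet.{0})) ◁ vertexMor n (Fin.last n)) ≫ uncurry D := by
    rw [comp_evTerm hm, uncurry_natural_left]
  have h3 := hv
  rw [← Category.assoc, h2] at h3
  have h4 := happ h3 q x₀
  refine Eq.trans ?_ h4
  have hr : ((λ_ (Δ[0] : SSet.{0})).inv ≫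
      ((wU ≫ bdryVertexMor m hm (Fin.last m)) ▷ (Δ[0] : SSet.{0})) ≫
        (((∂Δ[m] : SSet.{0})) ◁ vertexMor n (Fin.last n)) ≫ uncurry D).app q x₀
      = (uncurry D).app q ((wU ≫ bdryVertexMor m hm (Fin.last m)).app q PUnit.unit,
          (vertexMor n (Fin.last n)).app q x₀) := rfl
  rw [hr]
  apply congrArg
  refine Prod.ext ?_ ?_
  · exact Subtype.ext (stdext (fun _ => rfl))
  · exact (vertexMor_app_const (Fin.last n) x₀).symm

set_option maxRecDepth 10000 in
lemma ihom_fill {E X : SSet.{0}} (hm : 0 < m) (hn : 0 < n) (p : E ⟶ X)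
    (u' : (Δ[0] : SSet.{0}) ⟶ E) (hu' : IsUniversalVertex p u')
    (T : (∂Δ[n] : SSet.{0}) ⟶ (ihom (Δ[m] : SSet.{0})).obj E)
    (G : (Δ[n] : SSet.{0}) ⟶ (ihom (Δ[m] : SSet.{0})).obj X)
    (D : (Δ[n] : SSet.{0}) ⟶ (ihom (∂Δ[m] : SSet.{0})).obj E)
    (hTG : T ≫ (ihom _).map p = (∂Δ[n]).ι ≫ G)
    (hTD : T ≫ expRes m E = (∂Δ[n]).ι ≫ D)
    (hDG : D ≫ (ihom _).map p = G ≫ expRes m X)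
    (hv : vertexMor n (Fin.last n) ≫ D ≫ evTerm m hm E = u') :
    ∃ Φ : (Δ[n] : SSet.{0}) ⟶ (ihom (Δ[m] : SSet.{0})).obj E,
      (∂Δ[n]).ι ≫ Φ = T ∧
      Φ ≫ (ihom (Δ[m] : SSet.{0})).map p = G ∧
      Φ ≫ expRes m E = D := by
  have hexch : ((∂Δ[m]).ι ▷ (∂Δ[n] : SSet.{0})) ≫ uncurry T
      = ((∂Δ[m] : SSet.{0}) ◁ (∂Δ[n]).ι) ≫ uncurry D := by
    have h1 : uncurry (T ≫ expRes m E)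
        = ((∂Δ[m]).ι ▷ (∂Δ[n] : SSet.{0})) ≫ uncurry T :=
      uncurry_comp_pre _ T
    have h2 : uncurry ((∂Δ[n]).ι ≫ D)
        = ((∂Δ[m] : SSet.{0}) ◁ (∂Δ[n]).ι) ≫ uncurry D :=
      uncurry_natural_left _ _
    rw [← h1, ← h2, hTD]
  have hTD' : HTD (tT := uncurry T) (dD := uncurry D) := by
    intro q x y h1 h2
    have := happ hexch q (⟨x, h1⟩, ⟨y, h2⟩)
    exact this.symm
  have hTp : uncurry T ≫ p = ((Δ[m] : SSet.{0}) ◁ (∂Δ[n]).ι) ≫ uncurry G := by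
    rw [← uncurry_natural_right, hTG, uncurry_natural_left]
  have hDp : uncurry D ≫ p = ((∂Δ[m]).ι ▷ (Δ[n] : SSet.{0})) ≫ uncurry G := by
    rw [← uncurry_natural_right, hDG]
    exact uncurry_comp_pre _ G
  obtain ⟨H, hH1, hH2, hH3⟩ := fillLemma hm hu' hTD' (HVert_of hm hn u' D hv) hTp hDp
  refine ⟨curry H, ?_, ?_, ?_⟩
  · rw [← curry_natural_left, hH1, curry_uncurry]
  · rw [← curry_natural_right, hH3, curry_uncurry]
  · apply uncurry_injective
    have h1 : uncurry (curry H ≫ expRes m E)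
        = ((∂Δ[m]).ι ▷ (Δ[n] : SSet.{0})) ≫ uncurry (curry H) :=
      uncurry_comp_pre _ _
    rw [h1, uncurry_curry, hH2]

end Glue

end Fill
section Final

open MonoidalClosed CartesianMonoidalCategory

lemma bdry_incl {k : ℕ} (hk : 0 < k) (i : Fin (k + 1)) :
    bdryVertexMor k hk i ≫ (∂Δ[k]).ι = vertexMor k i := by
  ext q x
  rfl

lemma toUnit_wU : toUnit (Δ[0] : SSet.{0}) ≫ wU = 𝟙 (Δ[0] : SSet.{0}) := by
  ext q x

set_option maxRecDepth 10000 in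
lemma vertexSquare (hm : 0 < m) :
    bdryVertexMor m hm (Fin.last m) ≫ (ρ_ (∂Δ[m] : SSet.{0})).inv ≫
        ((∂Δ[m] : SSet.{0}) ◁ wU)
      = (λ_ (Δ[0] : SSet.{0})).inv ≫
        ((wU ≫ bdryVertexMor m hm (Fin.last m)) ▷ (Δ[0] : SSet.{0})) := by
  ext q x₀
  · exact congrArg ((bdryVertexMor m hm (Fin.last m)).app q) (Subsingleton.elim _ _)

end Final

section Main

open MonoidalClosed CartesianMonoidalCategory

set_option maxHeartbeats 1000000 in
lemma main (m : ℕ) (hm : 0 < m) {A₁ A₂ B₁ B₂ : SSet.{0}} (A : A₁ ⟶ A₂) (B : B₁ ⟶ B₂)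
    (D₁ : A₁ ⟶ (ihom ((∂Δ[m] : SSet.{0}))).obj B₁)
    (D₂ : A₂ ⟶ (ihom ((∂Δ[m] : SSet.{0}))).obj B₂)
    (hD : D₁ ≫ (ihom ((∂Δ[m] : SSet.{0}))).map B = A ≫ D₂)
    (d : (Δ[0] : SSet.{0}) ⟶ pullback D₂ (expRes m B₂))
    (u : (Δ[0] : SSet.{0}) ⟶ A₁)
    (hu : IsUniversalVertex A u)
    (hud : u ≫ A = d ≫ pullback.fst D₂ (expRes m B₂))
    (hB : IsUniversalVertex B (u ≫ D₁ ≫ evTerm m hm B₁)) :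
    ∃ ℓ : (Δ[0] : SSet.{0}) ⟶ pullback D₁ (expRes m B₁),
      ℓ ≫ inducedR m A B D₁ D₂ hD = d ∧
      ℓ ≫ pullback.fst D₁ (expRes m B₁) = u ∧
      IsUniversalVertex (inducedR m A B D₁ D₂ hD) ℓ := by
  have inducedR_fst : inducedR m A B D₁ D₂ hD ≫ pullback.fst D₂ (expRes m B₂)
      = pullback.fst D₁ (expRes m B₁) ≫ A := pullback.lift_fst _ _ _
  have inducedR_snd : inducedR m A B D₁ D₂ hD ≫ pullback.snd D₂ (expRes m B₂)
      = pullback.snd D₁ (expRes m B₁) ≫ (ihom ((Δ[m] : SSet.{0}))).map B :=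
    pullback.lift_snd _ _ _
  -- the filler of the bottom simplex
  set t₀ : (∂Δ[m] : SSet.{0}) ⟶ B₁ :=
    (ρ_ (∂Δ[m] : SSet.{0})).inv ≫ ((∂Δ[m] : SSet.{0}) ◁ wU) ≫ uncurry (u ≫ D₁) with ht₀
  set s₀ : (Δ[m] : SSet.{0}) ⟶ B₂ :=
    (ρ_ (Δ[m] : SSet.{0})).inv ≫ ((Δ[m] : SSet.{0}) ◁ wU) ≫
      uncurry (d ≫ pullback.snd D₂ (expRes m B₂)) with hs₀
  have huncs : uncurry (u ≫ D₁) ≫ B = ((∂Δ[m]).ι ▷ (Δ[0] : SSet.{0})) ≫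
      uncurry (d ≫ pullback.snd D₂ (expRes m B₂)) := by
    rw [← uncurry_natural_right]
    have h1 : (u ≫ D₁) ≫ (ihom ((∂Δ[m] : SSet.{0}))).map B
        = (d ≫ pullback.snd D₂ (expRes m B₂)) ≫ expRes m B₂ := by
      rw [Category.assoc, hD, ← Category.assoc, hud, Category.assoc, Category.assoc,
        pullback.condition]
    rw [h1]
    exact uncurry_comp_pre _ _
  have hsq₀ : t₀ ≫ B = (∂Δ[m]).ι ≫ s₀ := by
    rw [ht₀, hs₀]
    simp only [Category.assoc]
    rw [huncs, MonoidalCategory.rightUnitor_inv_naturality_assoc, whisker_exchange_assoc]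
  have hvt₀ : bdryVertexMor m hm (Fin.last m) ≫ t₀ = u ≫ D₁ ≫ evTerm m hm B₁ := by
    have hv2 := congrArg (fun f => f ≫ uncurry (u ≫ D₁)) (vertexSquare hm)
    simp only [Category.assoc] at hv2
    rw [← Category.assoc u, comp_evTerm hm (u ≫ D₁), ht₀]
    exact hv2
  obtain ⟨L₀, hL1, hL2⟩ := hB m hm t₀ s₀ hsq₀ hvt₀
  set F : (Δ[0] : SSet.{0}) ⟶ (ihom ((Δ[m] : SSet.{0}))).obj B₁ :=
    curry (((Δ[m] : SSet.{0}) ◁ toUnit (Δ[0] : SSet.{0})) ≫ (ρ_ (Δ[m] : SSet.{0})).hom ≫ L₀)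
    with hF
  have hF1 : F ≫ expRes m B₁ = u ≫ D₁ := by
    apply uncurry_injective
    have h1 : uncurry (F ≫ expRes m B₁)
        = ((∂Δ[m]).ι ▷ (Δ[0] : SSet.{0})) ≫ uncurry F := uncurry_comp_pre _ _
    rw [h1, hF, uncurry_curry, ← whisker_exchange_assoc,
      MonoidalCategory.rightUnitor_naturality_assoc, hL1, ht₀]
    rw [Iso.hom_inv_id_assoc, ← MonoidalCategory.whiskerLeft_comp_assoc, toUnit_wU,
      MonoidalCategory.whiskerLeft_id, Category.id_comp]
  have hF2 : F ≫ (ihom ((Δ[m] : SSet.{0}))).map B = d ≫ pullback.snd D₂ (expRes m B₂) := by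
    apply uncurry_injective
    rw [uncurry_natural_right, hF, uncurry_curry]
    simp only [Category.assoc]
    rw [hL2, hs₀]
    rw [Iso.hom_inv_id_assoc, ← MonoidalCategory.whiskerLeft_comp_assoc, toUnit_wU,
      MonoidalCategory.whiskerLeft_id, Category.id_comp]
  refine ⟨pullback.lift u F hF1.symm, ?_, pullback.lift_fst _ _ _, ?_⟩
  · apply pullback.hom_ext
    · rw [Category.assoc, inducedR_fst, ← Category.assoc, pullback.lift_fst, hud]
    · rw [Category.assoc, inducedR_snd, ← Category.assoc, pullback.lift_snd, hF2]
  · intro n hn t s hsq hvt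
    have hle2 : bdryVertexMor n hn (Fin.last n) ≫ t ≫ pullback.fst D₁ (expRes m B₁) = u := by
      rw [← Category.assoc, hvt, pullback.lift_fst]
    obtain ⟨ℓA, hA1, hA2⟩ := hu n hn (t ≫ pullback.fst D₁ (expRes m B₁))
      (s ≫ pullback.fst D₂ (expRes m B₂))
      (by rw [Category.assoc, ← inducedR_fst, ← Category.assoc, hsq, Category.assoc]) hle2
    obtain ⟨Φ, hP1, hP2, hP3⟩ := ihom_fill hm hn B (u ≫ D₁ ≫ evTerm m hm B₁) hB
      (t ≫ pullback.snd D₁ (expRes m B₁)) (s ≫ pullback.snd D₂ (expRes m B₂)) (ℓA ≫ D₁)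
      (by rw [Category.assoc, ← inducedR_snd, ← Category.assoc, hsq, Category.assoc])
      (by rw [Category.assoc, ← pullback.condition, ← Category.assoc, ← hA1, Category.assoc])
      (by rw [Category.assoc, hD, ← Category.assoc, hA2, Category.assoc, Category.assoc,
        pullback.condition])
      (by
        have hwv : vertexMor n (Fin.last n) ≫ ℓA = u := by
          rw [← bdry_incl hn (Fin.last n), Category.assoc, hA1, hle2]
        simp only [← Category.assoc]
        rw [show (vertexMor n (Fin.last n) ≫ ℓA) ≫ D₁ = u ≫ D₁ from by rw [hwv]])
    refine ⟨pullback.lift ℓA Φ hP3.symm, ?_, ?_⟩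
    · apply pullback.hom_ext
      · rw [Category.assoc, pullback.lift_fst, hA1]
      · rw [Category.assoc, pullback.lift_snd, hP1]
    · apply pullback.hom_ext
      · rw [Category.assoc, inducedR_fst, ← Category.assoc, pullback.lift_fst, hA2]
      · rw [Category.assoc, inducedR_snd, ← Category.assoc, pullback.lift_snd, hP2]

end Main

end Statement10

theorem exists_universal_vertex_over
    (m : ℕ) (hm : 0 < m) {A₁ A₂ B₁ B₂ : SSet.{0}} (A : A₁ ⟶ A₂) (B : B₁ ⟶ B₂)
    (D₁ : A₁ ⟶ (ihom ((∂Δ[m] : SSet.{0}))).obj B₁)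
    (D₂ : A₂ ⟶ (ihom ((∂Δ[m] : SSet.{0}))).obj B₂)
    (hD : D₁ ≫ (ihom ((∂Δ[m] : SSet.{0}))).map B = A ≫ D₂)
    (d : (Δ[0] : SSet.{0}) ⟶ pullback D₂ (expRes m B₂))
    (u : (Δ[0] : SSet.{0}) ⟶ A₁)
    (hu : IsUniversalVertex A u)
    (hud : u ≫ A = d ≫ pullback.fst D₂ (expRes m B₂))
    (hB : IsUniversalVertex B (u ≫ D₁ ≫ evTerm m hm B₁)) :
    ∃ ℓ : (Δ[0] : SSet.{0}) ⟶ pullback D₁ (expRes m B₁),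
      ℓ ≫ inducedR m A B D₁ D₂ hD = d ∧
      ℓ ≫ pullback.fst D₁ (expRes m B₁) = u ∧
      IsUniversalVertex (inducedR m A B D₁ D₂ hD) ℓ :=
  Statement10.main m hm A B D₁ D₂ hD d u hu hud hB
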